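/- arXiv:1406.4637 — 3 statements merged into one kernel-verified Lean document; each statement's English description precedes it below -/
import Mathlib

section
/- Let Z† = Π ∪ {−η} and Z = −Z†. If α and β both belong to Z and α + β is a root, then α + β is not in Z. -/
open scoped RealInnerProductSpace

/-- A reduced root system with a chosen base (set of simple roots) in a
Euclidean space, together with the (integer) coefficient function expressing
each root in the base. -/
structure RootSystemBase (V : Type) [NormedAddCommGroup V] [InnerProductSpace ℝ V] where
  Δ : Set V
  base : Finset V
  c : V → V → ℤ
  finite : Δ.Finite
  nonzero : ∀ α ∈ Δ, α ≠ (0 : V)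
  neg_mem : ∀ α ∈ Δ, -α ∈ Δ
  reduced : ∀ α ∈ Δ, ∀ t : ℝ, t • α ∈ Δ → t = 1 ∨ t = -1
  reflect_mem : ∀ α ∈ Δ, ∀ β ∈ Δ, β - (2 * ⟪β, α⟫ / ⟪α, α⟫) • α ∈ Δ
  pairing_int : ∀ α ∈ Δ, ∀ β ∈ Δ, ∃ n : ℤ, 2 * ⟪β, α⟫ / ⟪α, α⟫ = (n : ℝ)
  base_sub : (base : Set V) ⊆ Δ
  base_indep : LinearIndependent ℝ (fun α : base => (α : V))
  coeff_eq : ∀ β ∈ Δ, β = ∑ α ∈ base, (c β α : ℝ) • α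
  coeff_sign : ∀ β ∈ Δ, (∀ α ∈ base, 0 ≤ c β α) ∨ (∀ α ∈ base, c β α ≤ 0)

namespace RootSystemBase

variable {V : Type} [NormedAddCommGroup V] [InnerProductSpace ℝ V] (R : RootSystemBase V)

/-- A positive root: all coefficients in the base are nonnegative. -/
def Positive (β : V) : Prop := β ∈ R.Δ ∧ ∀ α ∈ R.base, 0 ≤ R.c β α

/-- The height (degree) of a root: the sum of its coefficients in the base. -/
def height (β : V) : ℤ := ∑ α ∈ R.base, R.c β α

/-- `η` is the highest root: it is positive and dominates every root
coefficientwise. -/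
def IsHighest (η : V) : Prop :=
  R.Positive η ∧ ∀ β ∈ R.Δ, ∀ α ∈ R.base, R.c β α ≤ R.c η α

/-- The conjugate cyclic root set `Z† = Π ∪ {−η}`. -/
def Zdag (η : V) : Set V := (R.base : Set V) ∪ {-η}

/-- The cyclic root set `Z = −Z†`. -/
def Zset (η : V) : Set V := {α : V | -α ∈ R.Zdag η}

/-- Irreducibility of the root system. -/
def Irreducible : Prop :=
  ∀ A B : Set V, A ∪ B = R.Δ → (∀ a ∈ A, ∀ b ∈ B, ⟪a, b⟫ = 0) →
    A = ∅ ∨ B = ∅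

/-- The coroot of a root. -/
noncomputable def coroot (α : V) : V := (2 / ⟪α, α⟫) • α

end RootSystemBase

/-!
Every root has integer coordinates in the base, and for roots `x`, `y`, `x + y` these coordinates
add. Hence the height `h` (sum of the coordinates) is additive on such triples. On `Z` it takes
only the values `h η ≥ 1` (at `η`) and `-1` (at the negated simple roots), and no sum of two of
these values, `2 h η`, `h η - 1` or `-2`, is again one of them.
-/

namespace RootSystemBase

variable {V : Type} [NormedAddCommGroup V] [InnerProductSpace ℝ V] (R : RootSystemBase V)

theorem eq_of_sum_smul_eq {f g : V → ℝ}
    (h : ∑ a ∈ R.base, f a • a = ∑ a ∈ R.base, g a • a) : ∀ a ∈ R.base, f a = g a := by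
  have hzero : ∑ i : R.base, (f i - g i) • (i : V) = 0 := by
    rw [Finset.sum_coe_sort R.base (fun a => (f a - g a) • a)]
    simp only [sub_smul, Finset.sum_sub_distrib, h, sub_self]
  intro a ha
  exact sub_eq_zero.mp (Fintype.linearIndependent_iff.mp R.base_indep _ hzero ⟨a, ha⟩)

theorem coeff_eq_of_eq_sum {x : V} (hx : x ∈ R.Δ) {f : V → ℤ}
    (h : x = ∑ a ∈ R.base, (f a : ℝ) • a) : ∀ a ∈ R.base, R.c x a = f a := by
  intro a ha
  exact_mod_cast R.eq_of_sum_smul_eq ((R.coeff_eq x hx).symm.trans h) a ha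

theorem coeff_add {x y : V} (hx : x ∈ R.Δ) (hy : y ∈ R.Δ) (hxy : x + y ∈ R.Δ) :
    ∀ a ∈ R.base, R.c (x + y) a = R.c x a + R.c y a := by
  refine R.coeff_eq_of_eq_sum hxy ?_
  simp only [Int.cast_add, add_smul, Finset.sum_add_distrib, ← R.coeff_eq x hx,
    ← R.coeff_eq y hy]

theorem coeff_neg_simple [DecidableEq V] {s : V} (hs : s ∈ R.base) :
    ∀ a ∈ R.base, R.c (-s) a = if a = s then -1 else 0 := by
  refine R.coeff_eq_of_eq_sum (R.neg_mem s (R.base_sub hs)) ?_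
  simp [apply_ite, hs]

theorem height_add {x y : V} (hx : x ∈ R.Δ) (hy : y ∈ R.Δ) (hxy : x + y ∈ R.Δ) :
    R.height (x + y) = R.height x + R.height y := by
  rw [height, Finset.sum_congr rfl (R.coeff_add hx hy hxy), Finset.sum_add_distrib]
  rfl

theorem height_neg_simple {s : V} (hs : s ∈ R.base) : R.height (-s) = -1 := by
  classical
  rw [height, Finset.sum_congr rfl (R.coeff_neg_simple hs)]
  simp only [Finset.sum_ite_eq', if_pos hs]

theorem height_pos {x : V} (hx : R.Positive x) : 0 < R.height x := by
  by_contra! hle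
  have hzero : ∀ a ∈ R.base, R.c x a = 0 :=
    (Finset.sum_eq_zero_iff_of_nonneg hx.2).mp (le_antisymm hle (Finset.sum_nonneg hx.2))
  apply R.nonzero x hx.1
  rw [R.coeff_eq x hx.1]
  exact Finset.sum_eq_zero fun a ha => by simp [hzero a ha]

theorem mem_Zset_iff {η x : V} : x ∈ R.Zset η ↔ -x ∈ R.base ∨ x = η := by
  simp [Zset, Zdag, or_comm]

theorem mem_Δ_of_mem_Zset {η x : V} (hη : η ∈ R.Δ) (hx : x ∈ R.Zset η) : x ∈ R.Δ := by
  rcases R.mem_Zset_iff.mp hx with hs | rfl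
  · simpa using R.neg_mem _ (R.base_sub hs)
  · exact hη

theorem height_of_mem_Zset {η x : V} (hx : x ∈ R.Zset η) :
    R.height x = -1 ∨ R.height x = R.height η := by
  rcases R.mem_Zset_iff.mp hx with hs | rfl
  · left
    simpa using R.height_neg_simple hs
  · exact Or.inr rfl

end RootSystemBase

theorem sum_of_cyclic_not_cyclic_general
    {V : Type} [NormedAddCommGroup V] [InnerProductSpace ℝ V]
    (R : RootSystemBase V)
    {η : V} (hη : R.IsHighest η)
    {α β : V} (hα : α ∈ R.Zset η) (hβ : β ∈ R.Zset η)
    (hroot : α + β ∈ R.Δ) :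
    α + β ∉ R.Zset η := by
  intro hsum
  have hηΔ : η ∈ R.Δ := hη.1.1
  have hη_pos := R.height_pos hη.1
  have hadd := R.height_add (R.mem_Δ_of_mem_Zset hηΔ hα) (R.mem_Δ_of_mem_Zset hηΔ hβ) hroot
  rcases R.height_of_mem_Zset hα with ha | ha <;> rcases R.height_of_mem_Zset hβ with hb | hb <;>
    rcases R.height_of_mem_Zset hsum with hs | hs <;> omega

/-- Let Z† = Π ∪ {−η} and Z = −Z†.  If α and β both belong
to Z and α + β is a root, then α + β is not in Z. -/
theorem sum_of_cyclic_not_cyclic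
    {V : Type} [NormedAddCommGroup V] [InnerProductSpace ℝ V]
    (R : RootSystemBase V) (hirr : R.Irreducible)
    {η : V} (hη : R.IsHighest η)
    {α β : V} (hα : α ∈ R.Zset η) (hβ : β ∈ R.Zset η)
    (hroot : α + β ∈ R.Δ) :
    α + β ∉ R.Zset η :=
  sum_of_cyclic_not_cyclic_general R hη hα hβ hroot
end

section
/- Let α₀, α₁, α₂, α₃ be elements of the cyclic root set Z = (−Π) ∪ {η} with α₀ + α₁ = α₂ + α₃ a root. Then {α₀, α₁} = {α₂, α₃}. -/
open scoped RealInnerProductSpace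

/-!
Writing `η = ∑ c_s s` over the simple roots with all `c_s ≥ 0`, the cyclic root set
`Z = (−Π) ∪ {η}` is affinely independent: in an affine relation with weight `w` on `η`, linear
independence of `Π` forces weight `w c_s` on `−s`, and the weights summing to zero gives
`w (1 + ht η) = 0`, so `w = 0`. In an affinely independent family, `a + b = c + d` is an affine
relation, hence `{a, b} = {c, d}`.
-/

section AffineIndependence

variable {k V ι : Type*} [AddCommGroup V]

theorem affineIndependent_option_elim_neg [Field k] [Module k V] [Fintype ι] {e : ι → V}
    (he : LinearIndependent k e) {c : ι → k} (hc : ∑ i, c i ≠ -1) :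
    AffineIndependent k fun o : Option ι => o.elim (∑ i, c i • e i) fun i => -e i := by
  rw [affineIndependent_iff_of_fintype]
  intro w hw hwp
  rw [Finset.weightedVSub_eq_linear_combination _ hw, Fintype.sum_option] at hwp
  rw [Fintype.sum_option] at hw
  have hrel : ∑ i, (w none * c i - w (some i)) • e i = 0 := by
    rw [← hwp]
    simp only [Option.elim, smul_neg, Finset.sum_neg_distrib, Finset.smul_sum, smul_smul,
      ← sub_eq_add_neg, ← Finset.sum_sub_distrib, ← sub_smul]
  have hsome : ∀ i, w (some i) = w none * c i := fun i => by
    linear_combination -Fintype.linearIndependent_iff.1 he _ hrel i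
  have hnone : w none * (1 + ∑ i, c i) = 0 := by
    simp only [hsome, ← Finset.mul_sum] at hw
    linear_combination hw
  have hnone : w none = 0 :=
    (mul_eq_zero.1 hnone).resolve_right fun h => hc (by linear_combination h)
  rintro (_ | i)
  · exact hnone
  · rw [hsome, hnone, zero_mul]

theorem AffineIndependent.eq_and_eq_or_eq_and_eq_of_add_eq_add [Ring k] [CharZero k]
    [Module k V] {p : ι → V} (hp : AffineIndependent k p) {a b c d : ι}
    (h : p a + p b = p c + p d) : a = c ∧ b = d ∨ a = d ∧ b = c := by
  classical
  have hw := hp.eq_of_sum_eq_sum (s := {a, b, c, d})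
    (w₁ := Pi.single a 1 + Pi.single b 1) (w₂ := Pi.single c 1 + Pi.single d 1)
    (by simp [Finset.sum_add_distrib])
    (by simpa [Finset.sum_add_distrib, add_smul, Pi.single_apply, ite_smul]) a (by simp)
  have hac : a = c ∨ a = d := by
    by_contra! hne
    rcases eq_or_ne b a with rfl | hba <;> simp_all [one_add_one_eq_two]
  rcases hac with rfl | rfl
  · exact .inl ⟨rfl, hp.injective (add_left_cancel h)⟩
  · exact .inr ⟨rfl, hp.injective (add_left_cancel (h.trans (add_comm _ _)))⟩

end AffineIndependence

namespace RootSystemBase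

variable {V : Type} [NormedAddCommGroup V] [InnerProductSpace ℝ V] (R : RootSystemBase V)

def cyclicRoot (η : V) (o : Option R.base) : V := o.elim η fun s => -s

theorem exists_cyclicRoot_eq {η α : V} (hα : α ∈ R.Zset η) : ∃ o, R.cyclicRoot η o = α := by
  rcases hα with hs | hη
  · exact ⟨some ⟨-α, hs⟩, neg_neg α⟩
  · exact ⟨none, (neg_injective hη).symm⟩

theorem affineIndependent_cyclicRoot {η : V} (hη : R.Positive η) :
    AffineIndependent ℝ (R.cyclicRoot η) := by
  have hsum : η = ∑ s : R.base, (R.c η s : ℝ) • (s : V) :=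
    (R.coeff_eq η hη.1).trans (Finset.sum_coe_sort R.base fun s => (R.c η s : ℝ) • s).symm
  have hnonneg : 0 ≤ ∑ s : R.base, (R.c η s : ℝ) :=
    Finset.sum_nonneg fun s _ => Int.cast_nonneg (hη.2 s s.2)
  unfold cyclicRoot
  rw [hsum]
  exact affineIndependent_option_elim_neg R.base_indep (by linarith)

end RootSystemBase

theorem cyclic_sum_determines_pair_general
    {V : Type} [NormedAddCommGroup V] [InnerProductSpace ℝ V]
    (R : RootSystemBase V)
    {η : V} (hη : R.IsHighest η)
    {α₀ α₁ α₂ α₃ : V}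
    (h₀ : α₀ ∈ R.Zset η) (h₁ : α₁ ∈ R.Zset η)
    (h₂ : α₂ ∈ R.Zset η) (h₃ : α₃ ∈ R.Zset η)
    (hsum : α₀ + α₁ = α₂ + α₃) :
    ({α₀, α₁} : Set V) = {α₂, α₃} := by
  obtain ⟨i₀, rfl⟩ := R.exists_cyclicRoot_eq h₀
  obtain ⟨i₁, rfl⟩ := R.exists_cyclicRoot_eq h₁
  obtain ⟨i₂, rfl⟩ := R.exists_cyclicRoot_eq h₂
  obtain ⟨i₃, rfl⟩ := R.exists_cyclicRoot_eq h₃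
  rcases (R.affineIndependent_cyclicRoot hη.1).eq_and_eq_or_eq_and_eq_of_add_eq_add hsum with
    ⟨rfl, rfl⟩ | ⟨rfl, rfl⟩
  · rfl
  · exact Set.pair_comm _ _

/-- Let α₀, α₁, α₂, α₃ be elements of the cyclic root set
Z = (−Π) ∪ {η} with α₀ + α₁ = α₂ + α₃ a root.  Then {α₀, α₁} = {α₂, α₃}. -/
theorem cyclic_sum_determines_pair
    {V : Type} [NormedAddCommGroup V] [InnerProductSpace ℝ V]
    (R : RootSystemBase V) (hirr : R.Irreducible)
    {η : V} (hη : R.IsHighest η)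
    {α₀ α₁ α₂ α₃ : V}
    (h₀ : α₀ ∈ R.Zset η) (h₁ : α₁ ∈ R.Zset η)
    (h₂ : α₂ ∈ R.Zset η) (h₃ : α₃ ∈ R.Zset η)
    (hsum : α₀ + α₁ = α₂ + α₃) (hroot : α₀ + α₁ ∈ R.Δ) :
    ({α₀, α₁} : Set V) = {α₂, α₃} :=
  cyclic_sum_determines_pair_general R hη h₀ h₁ h₂ h₃ hsum
end

section
/- Let f: Q → ℝ be a smooth function on a manifold diffeomorphic to a closed ball, with a unique critical point m in the interior, and suppose m is a local minimum. If f_n → f in C¹ and each f_n has at most one critical point in Q, then for n large enough, any critical point of f_n is a local minimum. -/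
open Metric Set Filter Topology

/-- Let f : Q → ℝ be a smooth function on a closed ball Q with
a unique critical point m in the interior, which is a local minimum.  If
f_n → f in C¹ and each f_n has at most one critical point in Q, then for n
large enough any critical point of f_n in Q is a local minimum. -/
theorem critical_points_of_C1_perturbations_are_minima
    {E : Type} [NormedAddCommGroup E] [NormedSpace ℝ E] [FiniteDimensional ℝ E]
    (Q : Set E) (hQ : Q = Metric.closedBall (0 : E) 1)
    (f : E → ℝ) (hf : ContDiff ℝ (⊤ : ℕ∞) f)
    (m : E) (hm : m ∈ interior Q)
    (hcrit : ∀ x ∈ Q, (fderiv ℝ f x = 0 ↔ x = m))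
    (hmin : IsLocalMinOn f Q m)
    (fn : ℕ → E → ℝ) (hfn : ∀ n, ContDiff ℝ (⊤ : ℕ∞) (fn n))
    -- C¹ convergence on Q:
    (hconv : ∀ ε > (0 : ℝ), ∃ N : ℕ, ∀ n ≥ N, ∀ x ∈ Q,
      |fn n x - f x| ≤ ε ∧ ‖fderiv ℝ (fn n) x - fderiv ℝ f x‖ ≤ ε)
    -- each fn has at most one critical point in Q:
    (huniq : ∀ n, ∀ x ∈ Q, ∀ y ∈ Q,
      fderiv ℝ (fn n) x = 0 → fderiv ℝ (fn n) y = 0 → x = y) :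
    ∃ N : ℕ, ∀ n ≥ N, ∀ x ∈ Q,
      fderiv ℝ (fn n) x = 0 → IsLocalMinOn (fn n) Q x := by
  rcases subsingleton_or_nontrivial E with hE | hE
  · -- trivial case: all points are equal
    refine ⟨0, fun n _ x hx _ => ?_⟩
    exact Filter.Eventually.of_forall fun y => le_of_eq (congrArg (fn n) (Subsingleton.elim x y))
  -- m is in the interior, so Q is a neighborhood of m
  have hmQmem : Q ∈ 𝓝 m := mem_interior_iff_mem_nhds.1 hm
  have hmQ : m ∈ Q := mem_of_mem_nhds hmQmem
  have hmin' : ∀ᶠ y in 𝓝 m, f m ≤ f y ∧ y ∈ interior Q := by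
    have h1 : ∀ᶠ y in 𝓝 m, f m ≤ f y := by
      have := hmin
      rwa [IsLocalMinOn, IsMinFilter, nhdsWithin_eq_nhds.2 hmQmem] at this
    exact h1.and (isOpen_interior.mem_nhds hm)
  rw [Metric.eventually_nhds_iff_ball] at hmin'
  obtain ⟨r, hr, hrball⟩ := hmin'
  set ρ := r / 2 with hρdef
  have hρ : 0 < ρ := by positivity
  have hcb_ball : closedBall m ρ ⊆ ball m r := by
    intro y hy
    have : dist y m ≤ ρ := mem_closedBall.1 hy
    exact mem_ball.2 (lt_of_le_of_lt this (by simp [hρdef]; linarith))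
  have hcbQ : closedBall m ρ ⊆ Q := fun y hy => interior_subset (hrball _ (hcb_ball hy)).2
  -- f > f m on the sphere of radius ρ
  have hsphere : ∀ y ∈ sphere m ρ, f m < f y := by
    intro y hy
    have hycb : y ∈ closedBall m ρ := sphere_subset_closedBall hy
    have hle : f m ≤ f y := (hrball _ (hcb_ball hycb)).1
    rcases lt_or_eq_of_le hle with h | h
    · exact h
    · exfalso
      -- y is a local min of f, hence a critical point, hence y = m: contradiction
      have hloc : IsLocalMin f y := by
        have hball : ball y ρ ∈ 𝓝 y := ball_mem_nhds y hρ
        refine Filter.eventually_of_mem hball fun z hz => ?_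
        have hzr : z ∈ ball m r := by
          have : dist z m ≤ dist z y + dist y m := dist_triangle _ _ _
          have hyz : dist z y < ρ := mem_ball.1 hz
          have hym : dist y m = ρ := mem_sphere.1 hy
          exact mem_ball.2 (by rw [hρdef] at *; linarith)
        calc f y = f m := h.symm
        _ ≤ f z := (hrball _ hzr).1
      have : y = m := (hcrit y (hcbQ hycb)).1 hloc.fderiv_eq_zero
      have : dist y m = ρ := mem_sphere.1 hy
      rw [‹y = m›, dist_self] at this
      linarith
  -- minimum of f on the sphere
  have hSne : (sphere m ρ).Nonempty := NormedSpace.sphere_nonempty.2 hρ.le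
  obtain ⟨y₀, hy₀S, hy₀min⟩ := (isCompact_sphere m ρ).exists_isMinOn hSne hf.continuous.continuousOn
  set c := f y₀ - f m with hcdef
  have hc : 0 < c := by have := hsphere y₀ hy₀S; simp [hcdef]; linarith
  -- lower bound for ‖fderiv f‖ on Q \ ball m ρ
  have hQcompact : IsCompact Q := hQ ▸ isCompact_closedBall 0 1
  have hδ : ∃ δ > 0, ∀ x ∈ Q \ ball m ρ, δ ≤ ‖fderiv ℝ f x‖ := by
    rcases eq_empty_or_nonempty (Q \ ball m ρ) with hK | hK
    · exact ⟨1, one_pos, fun x hx => absurd hx (by simp [hK])⟩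
    · have hKc : IsCompact (Q \ ball m ρ) := hQcompact.diff isOpen_ball
      have hcont : ContinuousOn (fun x => ‖fderiv ℝ f x‖) (Q \ ball m ρ) :=
        ((hf.continuous_fderiv (by simp)).norm).continuousOn
      obtain ⟨x₀, hx₀K, hx₀min⟩ := hKc.exists_isMinOn hK hcont
      refine ⟨‖fderiv ℝ f x₀‖, ?_, fun x hx => hx₀min hx⟩
      rw [gt_iff_lt, norm_pos_iff]
      intro h0
      have : x₀ = m := (hcrit x₀ hx₀K.1).1 h0
      exact hx₀K.2 (this ▸ mem_ball_self hρ)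
  obtain ⟨δ, hδpos, hδlb⟩ := hδ
  -- choose ε and N
  set ε := min (δ / 2) (c / 4) with hεdef
  have hεpos : 0 < ε := by positivity
  obtain ⟨N, hN⟩ := hconv ε hεpos
  refine ⟨N, fun n hn x hxQ hx0 => ?_⟩
  -- x must lie in ball m ρ
  have hxball : x ∈ ball m ρ := by
    by_contra hxK
    have hb := (hN n hn x hxQ).2
    rw [hx0] at hb
    have : ‖fderiv ℝ f x‖ ≤ ε := by
      have : ‖(0 : E →L[ℝ] ℝ) - fderiv ℝ f x‖ = ‖fderiv ℝ f x‖ := by simp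
      linarith [hb, this.symm.le]
    have hlb := hδlb x ⟨hxQ, hxK⟩
    have : ε ≤ δ / 2 := min_le_left _ _
    linarith
  -- minimizer of fn n on the closed ball
  obtain ⟨y₁, hy₁cb, hy₁min⟩ := (isCompact_closedBall m ρ).exists_isMinOn
    ⟨m, mem_closedBall_self hρ.le⟩ (hfn n).continuous.continuousOn
  have hy₁Q : y₁ ∈ Q := hcbQ hy₁cb
  rcases lt_or_eq_of_le (mem_closedBall.1 hy₁cb) with hlt | heq
  · -- y₁ is interior: it's a critical point of fn n, so y₁ = x
    have hloc : IsLocalMin (fn n) y₁ := by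
      have hball : closedBall m ρ ∈ 𝓝 y₁ :=
        Filter.mem_of_superset (isOpen_ball.mem_nhds (mem_ball.2 hlt)) ball_subset_closedBall
      exact Filter.eventually_of_mem hball fun z hz => hy₁min hz
    have hxy : x = y₁ := huniq n x hxQ y₁ hy₁Q hx0 hloc.fderiv_eq_zero
    -- x is a min of fn n on closedBall m ρ, a neighborhood of x
    have hnb : closedBall m ρ ∈ 𝓝[Q] x :=
      nhdsWithin_le_nhds
        (Filter.mem_of_superset (isOpen_ball.mem_nhds hxball) ball_subset_closedBall)
    exact Filter.eventually_of_mem hnb fun z hz => hxy ▸ hy₁min hz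
  · -- y₁ on the sphere: contradiction via values
    exfalso
    have hy₁S : y₁ ∈ sphere m ρ := mem_sphere.2 heq
    have h1 : fn n y₁ ≤ fn n m := hy₁min (mem_closedBall_self hρ.le)
    have h2 := (hN n hn m hmQ).1
    have h3 := (hN n hn y₁ hy₁Q).1
    have h4 : f y₀ ≤ f y₁ := hy₀min hy₁S
    have h5 : ε ≤ c / 4 := min_le_right _ _
    have h2' : fn n m ≤ f m + ε := by cases abs_le.1 h2; linarith
    have h3' : f y₁ - ε ≤ fn n y₁ := by cases abs_le.1 h3; linarith
    have : f m + c = f y₀ := by simp [hcdef]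
    linarith
end
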